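/- For a random variable X following the falling factorial distribution with parameter (n, θ), the score function l̇_θ(X) = X/θ − Σ_{i=1}^n 1/(θ+i-1) has expectation zero, and the Fisher information E[(l̇_θ(X))^2] equals ℓ_n(θ)/θ, where ℓ_n(θ) = Σ_{i=1}^n (i-1)/(θ+i-1)^2. -/

import Mathlib

open MeasureTheory ProbabilityTheory Finset

noncomputable def ellFn (m : ℕ) (θ : ℝ) : ℝ := ∑ i ∈ Finset.Icc 1 m, ((i : ℝ) - 1) / (θ + i - 1) ^ 2
noncomputable def Lfn (m : ℕ) (θ : ℝ) : ℝ := ∑ i ∈ Finset.Icc 1 m, 1 / (θ + i - 1)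
noncomputable def ffPMF (n : ℕ) (θ : ℝ) (x : ℕ) : ℝ :=
  ((ascPochhammer ℕ n).coeff x : ℝ) * θ ^ x / (ascPochhammer ℝ n).eval θ

/-!
The weights `|s̄(n,x)| θ^x` are the coefficients of the rising factorial
`P_n(θ) = θ (θ + 1) ⋯ (θ + n - 1)`, so `∑ x^k |s̄(n,x)| θ^x` is the value at `θ` of the Euler
operator `X d/dX` applied `k` times to `P_n`. That operator is a derivation and
`P_{n+1} = P_n (X + n)`, so induction on `n` gives `E X = θ Lfn n θ` and
`Var X = θ ellFn n θ` (the moments of a sum of independent Bernoulli variables with means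
`θ / (θ + i)`). The score is `(X - E X) / θ`, whence mean zero and second moment
`Var X / θ ^ 2`.

The hypothesis only prescribes the outer measures of the fibres of `X`; since they add up to
one, the fibres are null measurable, and expectations of functions of `X` are finite sums.
-/

namespace Polynomial

variable {R : Type*} [CommSemiring R]

noncomputable def euler (p : R[X]) : R[X] := X * derivative p

theorem coeff_euler (p : R[X]) (k : ℕ) : (euler p).coeff k = k * p.coeff k := by
  cases k with
  | zero => simp [euler]
  | succ k => simp [euler, coeff_derivative, mul_comm]

theorem euler_mul (p q : R[X]) : euler (p * q) = euler p * q + p * euler q := by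
  simp only [euler, derivative_mul]
  ring

theorem euler_add (p q : R[X]) : euler (p + q) = euler p + euler q := by
  simp only [euler, derivative_add, mul_add]

theorem euler_X : euler (X : R[X]) = X := by
  simp [euler]

theorem euler_natCast (n : ℕ) : euler (n : R[X]) = 0 := by
  simp [euler]

theorem coeff_iterate_euler (k : ℕ) (p : R[X]) (x : ℕ) :
    (euler^[k] p).coeff x = (x : R) ^ k * p.coeff x := by
  induction k with
  | zero => simp
  | succ k ih => rw [Function.iterate_succ_apply', coeff_euler, ih, pow_succ']; ring

theorem natDegree_iterate_euler_le (k : ℕ) (p : R[X]) : (euler^[k] p).natDegree ≤ p.natDegree :=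
  natDegree_le_iff_coeff_eq_zero.2 fun x hx => by
    rw [coeff_iterate_euler, coeff_eq_zero_of_natDegree_lt hx, mul_zero]

theorem eval_iterate_euler_eq_sum (k : ℕ) {p : R[X]} {N : ℕ} (hN : p.natDegree < N) (t : R) :
    (euler^[k] p).eval t = ∑ x ∈ range N, (x : R) ^ k * p.coeff x * t ^ x := by
  rw [eval_eq_sum_range' ((natDegree_iterate_euler_le k p).trans_lt hN)]
  simp only [coeff_iterate_euler]

end Polynomial

open Polynomial

theorem Lfn_succ (n : ℕ) (θ : ℝ) : Lfn (n + 1) θ = Lfn n θ + 1 / (θ + n) := by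
  rw [Lfn, Lfn, sum_Icc_succ_top (by omega)]
  push_cast
  ring

theorem ellFn_succ (n : ℕ) (θ : ℝ) : ellFn (n + 1) θ = ellFn n θ + n / (θ + n) ^ 2 := by
  rw [ellFn, ellFn, sum_Icc_succ_top (by omega)]
  push_cast
  ring

theorem eval_euler_ascPochhammer {θ : ℝ} (hθ : 0 < θ) (n : ℕ) :
    (euler (ascPochhammer ℝ n)).eval θ = (ascPochhammer ℝ n).eval θ * (θ * Lfn n θ) := by
  induction n with
  | zero => simp [euler, Lfn]
  | succ n ih =>
    have hθn : θ + n ≠ 0 := by positivity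
    simp only [ascPochhammer_succ_right, euler_mul, euler_add, euler_X, euler_natCast, add_zero,
      eval_add, eval_mul, eval_X, eval_natCast, ih, Lfn_succ]
    field_simp

theorem eval_euler_euler_ascPochhammer {θ : ℝ} (hθ : 0 < θ) (n : ℕ) :
    (euler (euler (ascPochhammer ℝ n))).eval θ
      = (ascPochhammer ℝ n).eval θ * ((θ * Lfn n θ) ^ 2 + θ * ellFn n θ) := by
  induction n with
  | zero => simp [euler, Lfn, ellFn]
  | succ n ih =>
    have hθn : θ + n ≠ 0 := by positivity
    simp only [ascPochhammer_succ_right, euler_mul, euler_add, euler_X, euler_natCast, add_zero,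
      eval_add, eval_mul, eval_X, eval_natCast, ih, eval_euler_ascPochhammer hθ, Lfn_succ,
      ellFn_succ]
    field_simp
    ring

namespace MeasureTheory

variable {Ω : Type*} [MeasurableSpace Ω] {μ : Measure Ω}

theorem nullMeasurableSet_of_measure_add_measure_compl_le [IsFiniteMeasure μ] {s : Set Ω}
    (h : μ s + μ sᶜ ≤ μ Set.univ) : NullMeasurableSet s μ := by
  -- `s` is the measurable set `tᶜ` up to `s ∩ t`, which `h` forces to be null.
  set t := toMeasurable μ sᶜ
  have ht : MeasurableSet t := measurableSet_toMeasurable μ sᶜ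
  have hdiff : s \ t = tᶜ := by
    rw [Set.sdiff_eq, Set.inter_eq_right.2 (Set.compl_subset_comm.1 (subset_toMeasurable μ sᶜ))]
  have hnull : μ (s ∩ t) = 0 := by
    refine nonpos_iff_eq_zero.1 (ENNReal.le_of_add_le_add_right (measure_ne_top μ Set.univ) ?_)
    calc μ (s ∩ t) + μ Set.univ = μ (s ∩ t) + μ (s \ t) + μ t := by
          rw [hdiff, add_assoc, add_comm (μ tᶜ), measure_add_measure_compl ht]
      _ = μ s + μ sᶜ := by rw [measure_inter_add_sdiff s ht, measure_toMeasurable]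
      _ ≤ 0 + μ Set.univ := by rwa [zero_add]
  rw [← Set.sdiff_union_inter s t, hdiff]
  exact ht.compl.nullMeasurableSet.union (NullMeasurableSet.of_null hnull)

theorem nullMeasurable_of_tsum_measure_fiber_le [IsFiniteMeasure μ] {α : Type*} [Countable α]
    [MeasurableSpace α] {X : Ω → α} (h : ∑' a, μ {ω | X ω = a} ≤ μ Set.univ) :
    NullMeasurable X μ := by
  classical
  have hfiber (a : α) : NullMeasurableSet {ω | X ω = a} μ := by
    refine nullMeasurableSet_of_measure_add_measure_compl_le (le_trans ?_ h)
    rw [ENNReal.tsum_eq_add_tsum_ite a]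
    gcongr
    calc μ {ω | X ω = a}ᶜ = μ (⋃ b, if b = a then ∅ else {ω | X ω = b}) := by
          congr 1; ext ω; simp [eq_comm]
      _ ≤ _ := measure_iUnion_le _
      _ = _ := tsum_congr fun b => by split_ifs <;> simp
  intro s _
  have : X ⁻¹' s = ⋃ a ∈ s, {ω | X ω = a} := by ext ω; simp
  rw [this]
  exact .biUnion s.to_countable fun a _ => hfiber a

theorem integral_comp_eq_sum_of_measure_fiber_eq_zero [IsFiniteMeasure μ] {α : Type*}
    [Countable α] [MeasurableSpace α] [DiscreteMeasurableSpace α] {E : Type*}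
    [NormedAddCommGroup E] [NormedSpace ℝ E] [CompleteSpace E] {X : Ω → α}
    (hX : AEMeasurable X μ) {s : Finset α}
    (hs : ∀ a ∉ s, μ {ω | X ω = a} = 0) (g : α → E) :
    ∫ ω, g (X ω) ∂μ = ∑ a ∈ s, μ.real {ω | X ω = a} • g a := by
  have hmem : ∀ᵐ a ∂μ.map X, a ∈ s := by
    refine (ae_map_iff hX MeasurableSet.of_discrete).2 (ae_iff.2 ?_)
    have : {ω | X ω ∉ s} = ⋃ a ∈ (s : Set α)ᶜ, {ω | X ω = a} := by ext; simp
    rw [this]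
    exact (measure_biUnion_null_iff (Set.to_countable _)).2 hs
  rw [← integral_map hX AEStronglyMeasurable.of_discrete,
    ← Measure.restrict_eq_self_of_ae_mem hmem, setIntegral_finset s IntegrableOn.finset]
  refine sum_congr rfl fun a _ => ?_
  rw [measureReal_def, measureReal_def,
    Measure.map_apply_of_aemeasurable hX MeasurableSet.of_discrete]
  rfl

end MeasureTheory

theorem natCast_coeff_ascPochhammer (S : Type*) [Semiring S] (n x : ℕ) :
    ((ascPochhammer ℕ n).coeff x : S) = (ascPochhammer S n).coeff x := by
  rw [← ascPochhammer_map (Nat.castRingHom S), coeff_map]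
  rfl

theorem ffPMF_nonneg {θ : ℝ} (hθ : 0 < θ) (n x : ℕ) : 0 ≤ ffPMF n θ x := by
  have := ascPochhammer_pos n θ hθ
  unfold ffPMF
  positivity

theorem ffPMF_eq_zero_of_lt (n : ℕ) (θ : ℝ) {x : ℕ} (hx : n < x) : ffPMF n θ x = 0 := by
  rw [ffPMF, coeff_eq_zero_of_natDegree_lt (by rwa [ascPochhammer_natDegree])]
  simp

theorem sum_pow_mul_ffPMF (k n : ℕ) (θ : ℝ) :
    ∑ x ∈ range (n + 1), (x : ℝ) ^ k * ffPMF n θ x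
      = (euler^[k] (ascPochhammer ℝ n)).eval θ / (ascPochhammer ℝ n).eval θ := by
  rw [eval_iterate_euler_eq_sum k (N := n + 1) (by rw [ascPochhammer_natDegree]; omega), sum_div]
  refine sum_congr rfl fun x _ => ?_
  rw [ffPMF, natCast_coeff_ascPochhammer]
  ring

theorem sum_ffPMF {θ : ℝ} (hθ : 0 < θ) (n : ℕ) : ∑ x ∈ range (n + 1), ffPMF n θ x = 1 := by
  simpa [(ascPochhammer_pos n θ hθ).ne'] using sum_pow_mul_ffPMF 0 n θ

theorem sum_mul_ffPMF {θ : ℝ} (hθ : 0 < θ) (n : ℕ) :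
    ∑ x ∈ range (n + 1), (x : ℝ) * ffPMF n θ x = θ * Lfn n θ := by
  simpa [eval_euler_ascPochhammer hθ, (ascPochhammer_pos n θ hθ).ne'] using
    sum_pow_mul_ffPMF 1 n θ

theorem sum_sq_mul_ffPMF {θ : ℝ} (hθ : 0 < θ) (n : ℕ) :
    ∑ x ∈ range (n + 1), (x : ℝ) ^ 2 * ffPMF n θ x = (θ * Lfn n θ) ^ 2 + θ * ellFn n θ := by
  simpa [eval_euler_euler_ascPochhammer hθ, (ascPochhammer_pos n θ hθ).ne'] using
    sum_pow_mul_ffPMF 2 n θ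

theorem integral_comp_eq_sum_ffPMF {Ω : Type*} [MeasurableSpace Ω] {μ : Measure Ω}
    [IsProbabilityMeasure μ] {X : Ω → ℕ} {n : ℕ} {θ : ℝ} (hθ : 0 < θ)
    (hX : ∀ x : ℕ, μ {ω | X ω = x} = ENNReal.ofReal (ffPMF n θ x)) (g : ℕ → ℝ) :
    ∫ ω, g (X ω) ∂μ = ∑ x ∈ range (n + 1), ffPMF n θ x * g x := by
  have hsupp : ∀ x ∉ range (n + 1), μ {ω | X ω = x} = 0 := fun x hx => by
    rw [hX, ffPMF_eq_zero_of_lt n θ (by simpa using hx), ENNReal.ofReal_zero]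
  have htotal : ∑' x, μ {ω | X ω = x} = μ Set.univ := by
    rw [tsum_eq_sum hsupp, measure_univ]
    simp only [hX]
    rw [← ENNReal.ofReal_sum_of_nonneg fun x _ => ffPMF_nonneg hθ n x, sum_ffPMF hθ,
      ENNReal.ofReal_one]
  rw [integral_comp_eq_sum_of_measure_fiber_eq_zero
    (nullMeasurable_of_tsum_measure_fiber_le htotal.le).aemeasurable hsupp]
  refine sum_congr rfl fun x _ => ?_
  rw [measureReal_def, hX, ENNReal.toReal_ofReal (ffPMF_nonneg hθ n x), smul_eq_mul]

theorem ff_score_general (Ω : Type*) [MeasurableSpace Ω] (μ : Measure Ω) [IsProbabilityMeasure μ]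
    (X : Ω → ℕ) (n : ℕ) (θ : ℝ) (hθ : 0 < θ)
    (hX : ∀ x : ℕ, μ {ω | X ω = x} = ENNReal.ofReal (ffPMF n θ x)) :
    (∫ ω, ((X ω : ℝ) / θ - Lfn n θ) ∂μ = 0) ∧
    (∫ ω, ((X ω : ℝ) / θ - Lfn n θ) ^ 2 ∂μ = ellFn n θ / θ) := by
  have hmass := sum_ffPMF hθ n
  have hmean := sum_mul_ffPMF hθ n
  have hsecond := sum_sq_mul_ffPMF hθ n
  set L := Lfn n θ
  constructor
  · calc ∫ ω, ((X ω : ℝ) / θ - L) ∂μ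
        = ∑ x ∈ range (n + 1), ffPMF n θ x * ((x : ℝ) / θ - L) :=
          integral_comp_eq_sum_ffPMF hθ hX fun x => (x : ℝ) / θ - L
      _ = θ⁻¹ * ∑ x ∈ range (n + 1), (x : ℝ) * ffPMF n θ x
            - L * ∑ x ∈ range (n + 1), ffPMF n θ x := by
          rw [mul_sum, mul_sum, ← sum_sub_distrib]
          exact sum_congr rfl fun x _ => by ring
      _ = 0 := by
          rw [hmass, hmean]
          field_simp
          ring
  · calc ∫ ω, ((X ω : ℝ) / θ - L) ^ 2 ∂μ
        = ∑ x ∈ range (n + 1), ffPMF n θ x * ((x : ℝ) / θ - L) ^ 2 :=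
          integral_comp_eq_sum_ffPMF hθ hX fun x => ((x : ℝ) / θ - L) ^ 2
      _ = (θ ^ 2)⁻¹ * ∑ x ∈ range (n + 1), (x : ℝ) ^ 2 * ffPMF n θ x
            - 2 * L / θ * ∑ x ∈ range (n + 1), (x : ℝ) * ffPMF n θ x
            + L ^ 2 * ∑ x ∈ range (n + 1), ffPMF n θ x := by
          rw [mul_sum, mul_sum, mul_sum, ← sum_sub_distrib, ← sum_add_distrib]
          exact sum_congr rfl fun x _ => by ring
      _ = ellFn n θ / θ := by
          rw [hmass, hmean, hsecond]
          field_simp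
          ring

theorem ff_score (Ω : Type*) [MeasurableSpace Ω] (μ : Measure Ω) [IsProbabilityMeasure μ]
    (X : Ω → ℕ) (n : ℕ) (θ : ℝ) (hn : 1 ≤ n) (hθ : 0 < θ)
    (hX : ∀ x : ℕ, μ {ω | X ω = x} = ENNReal.ofReal (ffPMF n θ x)) :
    (∫ ω, ((X ω : ℝ) / θ - Lfn n θ) ∂μ = 0) ∧
    (∫ ω, ((X ω : ℝ) / θ - Lfn n θ) ^ 2 ∂μ = ellFn n θ / θ) :=
  ff_score_general Ω μ X n θ hθ hX
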